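/- Assume there exists a generalized metric r ∈ ℝ^N_{>0} with constant extended α-curvature (K̃_i(r) = s_α(r)·r_i^α for all i). Then: if χ(M) > 0, the set Ȳ contains a point with all coordinates positive (Ȳ ∩ ℝ^N_{>0} ≠ ∅); if χ(M) < 0, Ȳ contains a point with all coordinates negative (Ȳ ∩ ℝ^N_{<0} ≠ ∅); and if χ(M) = 0, the zero vector belongs to Ȳ. -/
import Mathlib


open Real Filter Topology

namespace IDCP

variable {N : ℕ}

/-- The set of edges: 2-element subsets of vertices contained in some face. -/
def edges (Fc : Finset (Finset (Fin N))) : Finset (Finset (Fin N)) :=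
  Fc.biUnion fun f => f.powersetCard 2

/-- `Fc` is the face set of a triangulation of a closed connected surface:
every face has 3 vertices, every edge lies in exactly two faces, and the
1-skeleton is connected. -/
structure IsTriangulation (Fc : Finset (Finset (Fin N))) : Prop where
  card3 : ∀ f ∈ Fc, f.card = 3
  edge2 : ∀ e ∈ edges Fc, (Fc.filter fun f => e ⊆ f).card = 2
  conn : (SimpleGraph.fromRel fun i j => ({i, j} : Finset (Fin N)) ∈ edges Fc).Connected

/-- Euler characteristic χ(M) = N − |E| + |F|. -/
def chi (Fc : Finset (Finset (Fin N))) : ℤ :=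
  (N : ℤ) - ((edges Fc).card : ℤ) + (Fc.card : ℤ)

/-- Edge length l_ij = √(r_i² + r_j² + 2 r_i r_j I_{ij}). -/
noncomputable def len (I : Finset (Fin N) → ℝ) (r : Fin N → ℝ) (i j : Fin N) : ℝ :=
  Real.sqrt (r i ^ 2 + r j ^ 2 + 2 * r i * r j * I {i, j})

/-- The cosine of the inner angle at `i` in triangle `{i,j,k}`. -/
noncomputable def cosAng (I : Finset (Fin N) → ℝ) (r : Fin N → ℝ) (i j k : Fin N) : ℝ :=
  (len I r i j ^ 2 + len I r i k ^ 2 - len I r j k ^ 2) / (2 * len I r i j * len I r i k)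

/-- The auxiliary function Λ. -/
noncomputable def Lam (x : ℝ) : ℝ :=
  if x ≤ -1 then π else if x ≤ 1 then Real.arccos x else 0

/-- Discrete Gaussian curvature K_i = 2π − Σ_{{i,j,k}∈F} θ_i^{jk}.  Every face
containing `i` appears exactly twice (once for each ordering of `j,k`), whence
the factor 1/2. -/
noncomputable def K (Fc : Finset (Finset (Fin N))) (I : Finset (Fin N) → ℝ)
    (r : Fin N → ℝ) (i : Fin N) : ℝ :=
  2 * π - (1 / 2) * ∑ j, ∑ k,
    (if ({i, j, k} : Finset (Fin N)) ∈ Fc then Real.arccos (cosAng I r i j k) else 0)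

/-- Extended curvature K̃_i = 2π − Σ θ̃_i^{jk}, using the generalized angles Λ. -/
noncomputable def Kt (Fc : Finset (Finset (Fin N))) (I : Finset (Fin N) → ℝ)
    (r : Fin N → ℝ) (i : Fin N) : ℝ :=
  2 * π - (1 / 2) * ∑ j, ∑ k,
    (if ({i, j, k} : Finset (Fin N)) ∈ Fc then Lam (cosAng I r i j k) else 0)

/-- The set Ω of inversive distance circle packing metrics. -/
def Omega (Fc : Finset (Finset (Fin N))) (I : Finset (Fin N) → ℝ) : Set (Fin N → ℝ) :=
  {r | (∀ i, 0 < r i) ∧ ∀ i j k : Fin N, ({i, j, k} : Finset (Fin N)) ∈ Fc →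
    len I r j k < len I r i j + len I r i k}

/-- s_α = 2πχ(M)/‖r‖_α^α. -/
noncomputable def sA (Fc : Finset (Finset (Fin N))) (α : ℝ) (r : Fin N → ℝ) : ℝ :=
  2 * π * (chi Fc : ℝ) / ∑ j, r j ^ α

/-- Back from u-coordinates: r_i = e^{u_i}. -/
noncomputable def rOf (u : Fin N → ℝ) : Fin N → ℝ := fun i => Real.exp (u i)

/-- ln Ω, the image of Ω under the coordinate change r ↦ u, u_i = ln r_i. -/
def lnOmega (Fc : Finset (Finset (Fin N))) (I : Finset (Fin N) → ℝ) : Set (Fin N → ℝ) :=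
  {u | rOf u ∈ Omega Fc I}

/-- `u` solves the α-flow du_i/dt = s_α r_i^α − K_i on the time set `D`,
staying in ln Ω. -/
def IsFlowSol (Fc : Finset (Finset (Fin N))) (I : Finset (Fin N) → ℝ) (α : ℝ)
    (D : Set ℝ) (u : ℝ → Fin N → ℝ) : Prop :=
  ∀ t ∈ D, rOf (u t) ∈ Omega Fc I ∧
    ∀ i, HasDerivWithinAt (fun s => u s i)
      (sA Fc α (rOf (u t)) * rOf (u t) i ^ α - K Fc I (rOf (u t)) i) D t

/-- `u` solves the extended α-flow du_i/dt = s_α r_i^α − K̃_i on the time set `D`. -/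
def IsExtFlowSol (Fc : Finset (Finset (Fin N))) (I : Finset (Fin N) → ℝ) (α : ℝ)
    (D : Set ℝ) (u : ℝ → Fin N → ℝ) : Prop :=
  ∀ t ∈ D, ∀ i, HasDerivWithinAt (fun s => u s i)
      (sA Fc α (rOf (u t)) * rOf (u t) i ^ α - Kt Fc I (rOf (u t)) i) D t

/-- Lk(A): pairs (e,v) with both endpoints of e outside A, v ∈ A, and e,v spanning a face. -/
def Lk (Fc : Finset (Finset (Fin N))) (A : Finset (Fin N)) :
    Finset (Finset (Fin N) × Fin N) :=
  ((edges Fc) ×ˢ (Finset.univ : Finset (Fin N))).filter fun p =>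
    (∀ x ∈ p.1, x ∉ A) ∧ p.2 ∈ A ∧ insert p.2 p.1 ∈ Fc

/-- Euler characteristic χ(F_A) of the subcomplex spanned by A. -/
def chiSub (Fc : Finset (Finset (Fin N))) (A : Finset (Fin N)) : ℤ :=
  (A.card : ℤ) - (((edges Fc).filter (fun e => e ⊆ A)).card : ℤ)
    + ((Fc.filter (fun f => f ⊆ A)).card : ℤ)

/-- The lower bound −Σ_{(e,v)∈Lk(A)}(π − Λ(I_e)) + 2πχ(F_A) defining Y_A. -/
noncomputable def Ybound (Fc : Finset (Finset (Fin N))) (I : Finset (Fin N) → ℝ)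
    (A : Finset (Fin N)) : ℝ :=
  -(∑ p ∈ Lk Fc A, (π - Lam (I p.1))) + 2 * π * (chiSub Fc A : ℝ)

/-- x ∈ Y. -/
noncomputable def memY (Fc : Finset (Finset (Fin N))) (I : Finset (Fin N) → ℝ)
    (x : Fin N → ℝ) : Prop :=
  (∑ i, x i) = 2 * π * (chi Fc : ℝ) ∧
    ∀ A : Finset (Fin N), A.Nonempty → A ≠ Finset.univ → Ybound Fc I A < ∑ i ∈ A, x i

/-- x ∈ Ȳ. -/
noncomputable def memYbar (Fc : Finset (Finset (Fin N))) (I : Finset (Fin N) → ℝ)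
    (x : Fin N → ℝ) : Prop :=
  (∑ i, x i) = 2 * π * (chi Fc : ℝ) ∧
    ∀ A : Finset (Fin N), A.Nonempty → A ≠ Finset.univ → Ybound Fc I A ≤ ∑ i ∈ A, x i

section Aux

lemma Lam_nonneg (x : ℝ) : 0 ≤ Lam x := by
  unfold Lam; split_ifs
  · positivity
  · exact Real.arccos_nonneg _
  · exact le_rfl

lemma Lam_le_pi (x : ℝ) : Lam x ≤ π := by
  unfold Lam; split_ifs
  · exact le_rfl
  · exact Real.arccos_le_pi _
  · positivity

lemma arccos_anti : Antitone Real.arccos := by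
  intro a b hab
  rw [Real.arccos_eq_pi_div_two_sub_arcsin, Real.arccos_eq_pi_div_two_sub_arcsin]
  have := Real.monotone_arcsin hab
  linarith

lemma Lam_anti : Antitone Lam := by
  intro a b hab
  unfold Lam; split_ifs <;>
    first
      | exact le_rfl
      | linarith [Real.arccos_le_pi a, Real.arccos_le_pi b, Real.arccos_nonneg a,
          Real.arccos_nonneg b, Real.pi_pos, arccos_anti hab,
          Real.arccos_eq_pi.2 (le_refl (-1:ℝ))]

lemma Lam_of_le_neg_one {x : ℝ} (h : x ≤ -1) : Lam x = π := by simp [Lam, h]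

lemma Lam_of_one_le {x : ℝ} (h : 1 ≤ x) : Lam x = 0 := by
  unfold Lam; split_ifs with h1 h2
  · linarith
  · have : x = 1 := le_antisymm h2 h
    simp [this]
  · rfl

lemma Lam_of_mem {x : ℝ} (h1 : -1 ≤ x) (h2 : x ≤ 1) : Lam x = Real.arccos x := by
  unfold Lam; split_ifs with ha hb
  · have : x = -1 := le_antisymm ha h1
    simp [this, Real.arccos_neg_one]
  · rfl

lemma Lam_neg_of_nonneg {t : ℝ} (ht : 0 ≤ t) : Lam (-t) = π - Lam t := by
  rcases le_or_gt t 1 with h | h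
  · rw [Lam_of_mem (by linarith) (by linarith), Real.arccos_neg, Lam_of_mem (by linarith) h]
  · rw [Lam_of_le_neg_one (by linarith), Lam_of_one_le h.le]; ring

lemma arccos_sum_eq_pi {x y z : ℝ} (hx1 : -1 ≤ x) (hx2 : x ≤ 1) (hy1 : -1 ≤ y) (hy2 : y ≤ 1)
    (hz1 : -1 ≤ z) (hz2 : z ≤ 1) (hxy : 0 < x + y)
    (hid : (1 - x^2) * (1 - y^2) = (x*y + z)^2) (hpos : 0 ≤ x*y + z) :
    Lam x + Lam y + Lam z = π := by
  rw [Lam_of_mem hx1 hx2, Lam_of_mem hy1 hy2, Lam_of_mem hz1 hz2]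
  have hsum1 : Real.arccos x + Real.arccos y ≤ π := by
    have := arccos_anti (by linarith : -y ≤ x)
    rw [Real.arccos_neg] at this
    linarith
  have hsum0 : 0 ≤ Real.arccos x + Real.arccos y :=
    add_nonneg (Real.arccos_nonneg _) (Real.arccos_nonneg _)
  have hcos : Real.cos (Real.arccos x + Real.arccos y) = -z := by
    rw [Real.cos_add, Real.cos_arccos hx1 hx2, Real.cos_arccos hy1 hy2,
      Real.sin_arccos, Real.sin_arccos]
    have hxyz : Real.sqrt (1 - x^2) * Real.sqrt (1 - y^2) = x*y + z := by
      rw [← Real.sqrt_mul (by nlinarith), hid, Real.sqrt_sq hpos]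
    rw [hxyz]; ring
  have h := Real.arccos_cos hsum0 hsum1
  rw [hcos, Real.arccos_neg] at h
  linarith

/-- Sum of generalized angles of a (possibly degenerate) triangle with side lengths u,v,w. -/
lemma Lam_triangle {u v w : ℝ} (hu : 0 < u) (hv : 0 < v) (hw : 0 < w) :
    Lam ((u^2+v^2-w^2)/(2*u*v)) + Lam ((u^2+w^2-v^2)/(2*u*w))
      + Lam ((v^2+w^2-u^2)/(2*v*w)) = π := by
  rcases le_or_gt (u+v) w with h1 | h1
  · have e1 : Lam ((u^2+v^2-w^2)/(2*u*v)) = π := Lam_of_le_neg_one (by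
      rw [div_le_iff₀ (by positivity)]
      nlinarith [mul_nonneg (by linarith : (0:ℝ) ≤ w-u-v) (by linarith : (0:ℝ) ≤ w+u+v)])
    have e2 : Lam ((u^2+w^2-v^2)/(2*u*w)) = 0 := Lam_of_one_le (by
      rw [le_div_iff₀ (by positivity)]
      nlinarith [mul_nonneg (by linarith : (0:ℝ) ≤ w-u-v) (by linarith : (0:ℝ) ≤ w-u+v)])
    have e3 : Lam ((v^2+w^2-u^2)/(2*v*w)) = 0 := Lam_of_one_le (by
      rw [le_div_iff₀ (by positivity)]
      nlinarith [mul_nonneg (by linarith : (0:ℝ) ≤ w-v-u) (by linarith : (0:ℝ) ≤ w-v+u)])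
    rw [e1, e2, e3]; ring
  · rcases le_or_gt (u+w) v with h2 | h2
    · have e1 : Lam ((u^2+w^2-v^2)/(2*u*w)) = π := Lam_of_le_neg_one (by
        rw [div_le_iff₀ (by positivity)]
        nlinarith [mul_nonneg (by linarith : (0:ℝ) ≤ v-u-w) (by linarith : (0:ℝ) ≤ v+u+w)])
      have e2 : Lam ((u^2+v^2-w^2)/(2*u*v)) = 0 := Lam_of_one_le (by
        rw [le_div_iff₀ (by positivity)]
        nlinarith [mul_nonneg (by linarith : (0:ℝ) ≤ v-u-w) (by linarith : (0:ℝ) ≤ v-u+w)])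
      have e3 : Lam ((v^2+w^2-u^2)/(2*v*w)) = 0 := Lam_of_one_le (by
        rw [le_div_iff₀ (by positivity)]
        nlinarith [mul_nonneg (by linarith : (0:ℝ) ≤ v-w-u) (by linarith : (0:ℝ) ≤ v-w+u)])
      rw [e1, e2, e3]; ring
    · rcases le_or_gt (v+w) u with h3 | h3
      · have e1 : Lam ((v^2+w^2-u^2)/(2*v*w)) = π := Lam_of_le_neg_one (by
          rw [div_le_iff₀ (by positivity)]
          nlinarith [mul_nonneg (by linarith : (0:ℝ) ≤ u-v-w) (by linarith : (0:ℝ) ≤ u+v+w)])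
        have e2 : Lam ((u^2+v^2-w^2)/(2*u*v)) = 0 := Lam_of_one_le (by
          rw [le_div_iff₀ (by positivity)]
          nlinarith [mul_nonneg (by linarith : (0:ℝ) ≤ u-v-w) (by linarith : (0:ℝ) ≤ u-v+w)])
        have e3 : Lam ((u^2+w^2-v^2)/(2*u*w)) = 0 := Lam_of_one_le (by
          rw [le_div_iff₀ (by positivity)]
          nlinarith [mul_nonneg (by linarith : (0:ℝ) ≤ u-w-v) (by linarith : (0:ℝ) ≤ u-w+v)])
        rw [e1, e2, e3]; ring
      · -- nondegenerate case
        have f1 : (0:ℝ) < u+v+w := by linarith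
        have f2 : (0:ℝ) < -u+v+w := by linarith
        have f3 : (0:ℝ) < u-v+w := by linarith
        have f4 : (0:ℝ) < u+v-w := by linarith
        apply arccos_sum_eq_pi
        · rw [le_div_iff₀ (by positivity)]; nlinarith [mul_pos f2 f1]
        · rw [div_le_iff₀ (by positivity)]; nlinarith [mul_pos f3 f4]
        · rw [le_div_iff₀ (by positivity)]; nlinarith [mul_pos f3 f1]
        · rw [div_le_iff₀ (by positivity)]; nlinarith [mul_pos f2 f4]
        · rw [le_div_iff₀ (by positivity)]; nlinarith [mul_pos f4 f1]
        · rw [div_le_iff₀ (by positivity)]; nlinarith [mul_pos f2 f3]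
        · rw [div_add_div _ _ (by positivity) (by positivity)]
          apply div_pos _ (by positivity)
          nlinarith [mul_pos (mul_pos (mul_pos hu f2) f3) f4]
        · field_simp; ring
        · have e1 : (u^2+v^2-w^2)/(2*u*v) * ((u^2+w^2-v^2)/(2*u*w)) + (v^2+w^2-u^2)/(2*v*w)
              = ((u+v+w)*(-u+v+w)*(u-v+w)*(u+v-w))/(4*u^2*v*w) := by
            field_simp; ring
          rw [e1]
          exact (div_pos (by positivity) (by positivity)).le



variable {Fc : Finset (Finset (Fin N))} {I : Finset (Fin N) → ℝ} {r : Fin N → ℝ}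

lemma pair_mem_edges {x y : Fin N} {f : Finset (Fin N)} (hf : f ∈ Fc)
    (hsub : ({x, y} : Finset (Fin N)) ⊆ f) (hxy : x ≠ y) : ({x, y} : Finset (Fin N)) ∈ edges Fc := by
  unfold edges
  rw [Finset.mem_biUnion]
  exact ⟨f, hf, Finset.mem_powersetCard.2 ⟨hsub, Finset.card_pair hxy⟩⟩

lemma len_symm (i j : Fin N) : len I r i j = len I r j i := by
  unfold len
  rw [Finset.pair_comm]
  congr 1
  ring

lemma len_pos (hI : 0 ≤ I {i, j}) (hi : 0 < r i) (hj : 0 < r j) : 0 < len I r i j := by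
  unfold len
  apply Real.sqrt_pos.2
  nlinarith [mul_nonneg (by positivity : (0:ℝ) ≤ 2 * r i * r j) hI]

lemma len_sq (hI : 0 ≤ I {i, j}) (hi : 0 < r i) (hj : 0 < r j) :
    (len I r i j) ^ 2 = r i ^ 2 + r j ^ 2 + 2 * r i * r j * I {i, j} := by
  unfold len
  apply Real.sq_sqrt
  nlinarith [mul_nonneg (by positivity : (0:ℝ) ≤ 2 * r i * r j) hI]

lemma len_ge (hI : 0 ≤ I {i, j}) (hi : 0 < r i) (hj : 0 < r j) : r j ≤ len I r i j := by
  unfold len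
  have h := Real.sqrt_le_sqrt (by nlinarith [mul_nonneg (by positivity : (0:ℝ) ≤ 2 * r i * r j) hI] :
    r j ^ 2 ≤ r i ^ 2 + r j ^ 2 + 2 * r i * r j * I {i, j})
  rwa [Real.sqrt_sq hj.le] at h

/-- Angle sum of a face is π. -/
lemma face_angles (hxy : x ≠ y) (hxz : x ≠ z) (hyz : y ≠ z)
    (hI1 : 0 ≤ I {x, y}) (hI2 : 0 ≤ I {x, z}) (hI3 : 0 ≤ I {y, z})
    (hx : 0 < r x) (hy : 0 < r y) (hz : 0 < r z) :
    Lam (cosAng I r x y z) + Lam (cosAng I r y x z) + Lam (cosAng I r z x y) = π := by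
  have ha : 0 < len I r x y := len_pos hI1 hx hy
  have hb : 0 < len I r x z := len_pos hI2 hx hz
  have hc : 0 < len I r y z := len_pos hI3 hy hz
  have e1 : len I r y x = len I r x y := len_symm y x
  have e2 : len I r z x = len I r x z := len_symm z x
  have e3 : len I r z y = len I r y z := len_symm z y
  unfold cosAng
  rw [e1, e2, e3]
  exact Lam_triangle ha hb hc

/-- Bound on the angle at a vertex opposite to an edge. -/
lemma angle_le_opp (hI1 : 0 ≤ I {v, j}) (hI2 : 0 ≤ I {v, k}) (hI3 : 0 ≤ I {j, k})
    (hv : 0 < r v) (hj : 0 < r j) (hk : 0 < r k) :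
    Lam (cosAng I r v j k) ≤ π - Lam (I {j, k}) := by
  rw [← Lam_neg_of_nonneg hI3]
  apply Lam_anti
  unfold cosAng
  have l1 := len_pos hI1 hv hj
  have l2 := len_pos hI2 hv hk
  rw [le_div_iff₀ (by positivity : (0:ℝ) < 2 * len I r v j * len I r v k)]
  rw [len_sq hI1 hv hj, len_sq hI2 hv hk, len_sq hI3 hj hk]
  have g1 : r j ≤ len I r v j := len_ge hI1 hv hj
  have g2 : r k ≤ len I r v k := len_ge hI2 hv hk
  nlinarith [mul_nonneg hI3 (sub_nonneg.2 (mul_le_mul g1 g2 hk.le (by linarith))),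
    mul_nonneg (mul_nonneg hv.le hj.le) hI1, mul_nonneg (mul_nonneg hv.le hk.le) hI2,
    sq_nonneg (r v)]



set_option maxHeartbeats 1600000 in
lemma triple_eq_iff {x y z i j k : Fin N} (hxy : x ≠ y) (hxz : x ≠ z) (hyz : y ≠ z) :
    ({i, j, k} : Finset (Fin N)) = {x, y, z} ↔
      (i=x∧j=y∧k=z) ∨ (i=x∧j=z∧k=y) ∨ (i=y∧j=x∧k=z) ∨ (i=y∧j=z∧k=x) ∨
      (i=z∧j=x∧k=y) ∨ (i=z∧j=y∧k=x) := by
  constructor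
  · intro h
    have hi : i = x ∨ i = y ∨ i = z := by
      have : i ∈ ({x,y,z} : Finset (Fin N)) := h ▸ (by simp)
      simpa using this
    have hj : j = x ∨ j = y ∨ j = z := by
      have : j ∈ ({x,y,z} : Finset (Fin N)) := h ▸ (by simp)
      simpa using this
    have hk : k = x ∨ k = y ∨ k = z := by
      have : k ∈ ({x,y,z} : Finset (Fin N)) := h ▸ (by simp)
      simpa using this
    have hx' : x = i ∨ x = j ∨ x = k := by
      have : x ∈ ({i,j,k} : Finset (Fin N)) := h ▸ (by simp)
      simpa using this
    have hy' : y = i ∨ y = j ∨ y = k := by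
      have : y ∈ ({i,j,k} : Finset (Fin N)) := h ▸ (by simp)
      simpa using this
    have hz' : z = i ∨ z = j ∨ z = k := by
      have : z ∈ ({i,j,k} : Finset (Fin N)) := h ▸ (by simp)
      simpa using this
    clear h
    have hyx : y ≠ x := hxy.symm
    have hzx : z ≠ x := hxz.symm
    have hzy : z ≠ y := hyz.symm
    rcases hi with rfl | rfl | rfl <;> rcases hj with rfl | rfl | rfl <;>
      rcases hk with rfl | rfl | rfl <;> simp_all
  · rintro (⟨rfl,rfl,rfl⟩|⟨rfl,rfl,rfl⟩|⟨rfl,rfl,rfl⟩|⟨rfl,rfl,rfl⟩|⟨rfl,rfl,rfl⟩|⟨rfl,rfl,rfl⟩) <;>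
      (ext a; simp; try tauto)

lemma cosAng_swap (i j k : Fin N) : cosAng I r i j k = cosAng I r i k j := by
  unfold cosAng
  rw [show len I r k j = len I r j k from len_symm k j]
  ring

/-- The half-sum of the generalized angles of the face `f` at its vertices lying in `A`,
counted via ordered triples. -/
noncomputable def Cf (I : Finset (Fin N) → ℝ) (r : Fin N → ℝ) (A f : Finset (Fin N)) : ℝ :=
  (1/2) * ∑ p ∈ (Finset.univ : Finset (Fin N × Fin N × Fin N)).filter
      (fun p => p.1 ∈ A ∧ ({p.1, p.2.1, p.2.2} : Finset (Fin N)) = f),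
    Lam (cosAng I r p.1 p.2.1 p.2.2)

lemma sum_Kt (Fc : Finset (Finset (Fin N))) (A : Finset (Fin N)) :
    ∑ i ∈ A, Kt Fc I r i = 2 * π * A.card - ∑ f ∈ Fc, Cf I r A f := by
  unfold Kt
  have inner : ∀ i : Fin N, (∑ j, ∑ k,
      (if ({i, j, k} : Finset (Fin N)) ∈ Fc then Lam (cosAng I r i j k) else 0))
      = ∑ q ∈ (Finset.univ : Finset (Fin N)) ×ˢ (Finset.univ : Finset (Fin N)),
        (if ({i, q.1, q.2} : Finset (Fin N)) ∈ Fc then Lam (cosAng I r i q.1 q.2) else 0) :=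
    fun i => (Finset.sum_product' _ _ _).symm
  have key : ∑ i ∈ A, ∑ j, ∑ k,
      (if ({i, j, k} : Finset (Fin N)) ∈ Fc then Lam (cosAng I r i j k) else 0)
      = ∑ f ∈ Fc, ∑ p ∈ (Finset.univ : Finset (Fin N × Fin N × Fin N)).filter
          (fun p => p.1 ∈ A ∧ ({p.1, p.2.1, p.2.2} : Finset (Fin N)) = f),
        Lam (cosAng I r p.1 p.2.1 p.2.2) := by
    rw [Finset.sum_congr rfl (fun i _ => inner i),
      ← Finset.sum_product' (s := A) (t := (Finset.univ : Finset (Fin N)) ×ˢ (Finset.univ : Finset (Fin N)))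
        (f := fun i q => if ({i, q.1, q.2} : Finset (Fin N)) ∈ Fc then Lam (cosAng I r i q.1 q.2) else 0)]
    rw [show ∑ p ∈ A ×ˢ ((Finset.univ : Finset (Fin N)) ×ˢ (Finset.univ : Finset (Fin N))),
          (if ({p.1, p.2.1, p.2.2} : Finset (Fin N)) ∈ Fc then Lam (cosAng I r p.1 p.2.1 p.2.2) else 0)
          = ∑ p ∈ (A ×ˢ ((Finset.univ : Finset (Fin N)) ×ˢ (Finset.univ : Finset (Fin N)))).filter
              (fun p => ({p.1, p.2.1, p.2.2} : Finset (Fin N)) ∈ Fc),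
            Lam (cosAng I r p.1 p.2.1 p.2.2) from (Finset.sum_filter _ _).symm]
    rw [← Finset.sum_fiberwise_of_maps_to
      (g := fun p : Fin N × Fin N × Fin N => ({p.1, p.2.1, p.2.2} : Finset (Fin N)))
      (t := Fc) (fun p hp => (Finset.mem_filter.1 hp).2)]
    apply Finset.sum_congr rfl
    intro f hf
    apply Finset.sum_congr _ (fun _ _ => rfl)
    ext p
    simp only [Finset.mem_filter, Finset.mem_product, Finset.mem_univ, true_and, and_true]
    constructor
    · rintro ⟨⟨h1, _⟩, h3⟩
      exact ⟨h1, h3⟩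
    · rintro ⟨h1, h3⟩
      exact ⟨⟨h1, h3 ▸ hf⟩, h3⟩
  rw [Finset.sum_sub_distrib, Finset.sum_const, nsmul_eq_mul]
  congr 1
  · ring
  · rw [← Finset.mul_sum, key, Finset.mul_sum]
    rfl


set_option maxHeartbeats 3200000 in
lemma Cf_eq (A : Finset (Fin N)) {x y z : Fin N} (hxy : x ≠ y) (hxz : x ≠ z) (hyz : y ≠ z) :
    Cf I r A {x, y, z} = (if x ∈ A then Lam (cosAng I r x y z) else 0)
      + (if y ∈ A then Lam (cosAng I r y x z) else 0)
      + (if z ∈ A then Lam (cosAng I r z x y) else 0) := by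
  unfold Cf
  have hset : (Finset.univ : Finset (Fin N × Fin N × Fin N)).filter
      (fun p => p.1 ∈ A ∧ ({p.1, p.2.1, p.2.2} : Finset (Fin N)) = {x, y, z}) =
      ({(x,y,z),(x,z,y),(y,x,z),(y,z,x),(z,x,y),(z,y,x)} :
        Finset (Fin N × Fin N × Fin N)).filter (fun p => p.1 ∈ A) := by
    ext p
    simp only [Finset.mem_filter, Finset.mem_univ, true_and, Finset.mem_insert,
      Finset.mem_singleton, triple_eq_iff hxy hxz hyz, Prod.ext_iff]
    rw [and_comm]
  rw [hset, Finset.sum_filter]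
  have d : ∀ (a b c d e g : Fin N), (a, b, c) ≠ (d, e, g) ∨ True := fun _ _ _ _ _ _ => Or.inr trivial
  rw [Finset.sum_insert (by
      simp [Prod.ext_iff, hxy, hxz, hyz, Ne.symm hxy, Ne.symm hxz, Ne.symm hyz]),
    Finset.sum_insert (by
      simp [Prod.ext_iff, hxy, hxz, hyz, Ne.symm hxy, Ne.symm hxz, Ne.symm hyz]),
    Finset.sum_insert (by
      simp [Prod.ext_iff, hxy, hxz, hyz, Ne.symm hxy, Ne.symm hxz, Ne.symm hyz]),
    Finset.sum_insert (by
      simp [Prod.ext_iff, hxy, hxz, hyz, Ne.symm hxy, Ne.symm hxz, Ne.symm hyz]),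
    Finset.sum_insert (by
      simp [Prod.ext_iff, hxy, hxz, hyz, Ne.symm hxy, Ne.symm hxz, Ne.symm hyz]),
    Finset.sum_singleton]
  rw [show cosAng I r x z y = cosAng I r x y z from (cosAng_swap x y z).symm,
    show cosAng I r y z x = cosAng I r y x z from (cosAng_swap y x z).symm,
    show cosAng I r z y x = cosAng I r z x y from (cosAng_swap z x y).symm]
  ring

/-- Upper bound for the angle contribution of a face. -/
noncomputable def Bf (I : Finset (Fin N) → ℝ) (A f : Finset (Fin N)) : ℝ :=
  if (f ∩ A).card = 1 then π - Lam (I (f \ A))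
  else if 2 ≤ (f ∩ A).card then π else 0

lemma Cf_le_Bf {Fc : Finset (Finset (Fin N))} (hT : IsTriangulation Fc)
    (hI : ∀ e ∈ edges Fc, 0 ≤ I e) (hr : ∀ i, 0 < r i) {f : Finset (Fin N)} (hf : f ∈ Fc)
    (A : Finset (Fin N)) : Cf I r A f ≤ Bf I A f := by
  obtain ⟨x, y, z, hxy, hxz, hyz, rfl⟩ := Finset.card_eq_three.1 (hT.card3 f hf)
  have hIxy : 0 ≤ I {x, y} := hI _ (pair_mem_edges hf (by simp [Finset.insert_subset_iff]) hxy)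
  have hIxz : 0 ≤ I {x, z} := hI _ (pair_mem_edges hf (by simp [Finset.insert_subset_iff]) hxz)
  have hIyz : 0 ≤ I {y, z} := hI _ (pair_mem_edges hf (by simp [Finset.insert_subset_iff]) hyz)
  have hIyx : 0 ≤ I {y, x} := hI _ (pair_mem_edges hf (by simp [Finset.insert_subset_iff]) hxy.symm)
  have hIzx : 0 ≤ I {z, x} := hI _ (pair_mem_edges hf (by simp [Finset.insert_subset_iff]) hxz.symm)
  have hIzy : 0 ≤ I {z, y} := hI _ (pair_mem_edges hf (by simp [Finset.insert_subset_iff]) hyz.symm)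
  have hsum := face_angles hxy hxz hyz hIxy hIxz hIyz (hr x) (hr y) (hr z)
  rw [Cf_eq A hxy hxz hyz]
  unfold Bf
  by_cases hx : x ∈ A <;> by_cases hy : y ∈ A <;> by_cases hz : z ∈ A
  · -- all three
    have hS : ({x, y, z} : Finset (Fin N)) ∩ A = {x, y, z} :=
      Finset.inter_eq_left.2 (by simp [Finset.insert_subset_iff, hx, hy, hz])
    rw [hS]
    have hc : ({x, y, z} : Finset (Fin N)).card = 3 := hT.card3 _ hf
    rw [hc]
    norm_num [hx, hy, hz]
    linarith [hsum]
  · have hS : ({x, y, z} : Finset (Fin N)) ∩ A = {x, y} := by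
      ext a; simp only [Finset.mem_inter, Finset.mem_insert, Finset.mem_singleton]
      constructor
      · rintro ⟨rfl | rfl | rfl, ha⟩
        · exact Or.inl rfl
        · exact Or.inr rfl
        · exact absurd ha hz
      · rintro (rfl | rfl)
        · exact ⟨Or.inl rfl, hx⟩
        · exact ⟨Or.inr (Or.inl rfl), hy⟩
    rw [hS, Finset.card_pair hxy]
    norm_num [hx, hy, hz]
    linarith [Lam_nonneg (cosAng I r z x y)]
  · have hS : ({x, y, z} : Finset (Fin N)) ∩ A = {x, z} := by
      ext a; simp only [Finset.mem_inter, Finset.mem_insert, Finset.mem_singleton]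
      constructor
      · rintro ⟨rfl | rfl | rfl, ha⟩
        · exact Or.inl rfl
        · exact absurd ha hy
        · exact Or.inr rfl
      · rintro (rfl | rfl)
        · exact ⟨Or.inl rfl, hx⟩
        · exact ⟨Or.inr (Or.inr rfl), hz⟩
    rw [hS, Finset.card_pair hxz]
    norm_num [hx, hy, hz]
    linarith [Lam_nonneg (cosAng I r y x z)]
  · -- only x
    have hS : ({x, y, z} : Finset (Fin N)) ∩ A = {x} := by
      ext a; simp only [Finset.mem_inter, Finset.mem_insert, Finset.mem_singleton]
      constructor
      · rintro ⟨rfl | rfl | rfl, ha⟩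
        · rfl
        · exact absurd ha hy
        · exact absurd ha hz
      · rintro rfl
        exact ⟨Or.inl rfl, hx⟩
    have hD : ({x, y, z} : Finset (Fin N)) \ A = {y, z} := by
      ext a; simp only [Finset.mem_sdiff, Finset.mem_insert, Finset.mem_singleton]
      constructor
      · rintro ⟨rfl | rfl | rfl, ha⟩
        · exact absurd hx ha
        · exact Or.inl rfl
        · exact Or.inr rfl
      · rintro (rfl | rfl)
        · exact ⟨Or.inr (Or.inl rfl), hy⟩
        · exact ⟨Or.inr (Or.inr rfl), hz⟩
    rw [hS, hD, Finset.card_singleton, if_pos rfl]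
    simp only [hx, hy, hz, if_pos, if_neg, if_true, if_false]
    have := angle_le_opp hIxy hIxz hIyz (hr x) (hr y) (hr z)
    linarith
  · -- y and z
    have hS : ({x, y, z} : Finset (Fin N)) ∩ A = {y, z} := by
      ext a; simp only [Finset.mem_inter, Finset.mem_insert, Finset.mem_singleton]
      constructor
      · rintro ⟨rfl | rfl | rfl, ha⟩
        · exact absurd ha hx
        · exact Or.inl rfl
        · exact Or.inr rfl
      · rintro (rfl | rfl)
        · exact ⟨Or.inr (Or.inl rfl), hy⟩
        · exact ⟨Or.inr (Or.inr rfl), hz⟩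
    rw [hS, Finset.card_pair hyz]
    norm_num [hx, hy, hz]
    linarith [Lam_nonneg (cosAng I r x y z)]
  · -- only y
    have hS : ({x, y, z} : Finset (Fin N)) ∩ A = {y} := by
      ext a; simp only [Finset.mem_inter, Finset.mem_insert, Finset.mem_singleton]
      constructor
      · rintro ⟨rfl | rfl | rfl, ha⟩
        · exact absurd ha hx
        · rfl
        · exact absurd ha hz
      · rintro rfl
        exact ⟨Or.inr (Or.inl rfl), hy⟩
    have hD : ({x, y, z} : Finset (Fin N)) \ A = {x, z} := by
      ext a; simp only [Finset.mem_sdiff, Finset.mem_insert, Finset.mem_singleton]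
      constructor
      · rintro ⟨rfl | rfl | rfl, ha⟩
        · exact Or.inl rfl
        · exact absurd hy ha
        · exact Or.inr rfl
      · rintro (rfl | rfl)
        · exact ⟨Or.inl rfl, hx⟩
        · exact ⟨Or.inr (Or.inr rfl), hz⟩
    rw [hS, hD, Finset.card_singleton, if_pos rfl]
    simp only [hx, hy, hz, if_pos, if_neg, if_true, if_false]
    have := angle_le_opp hIyx hIyz hIxz (hr y) (hr x) (hr z)
    linarith
  · -- only z
    have hS : ({x, y, z} : Finset (Fin N)) ∩ A = {z} := by
      ext a; simp only [Finset.mem_inter, Finset.mem_insert, Finset.mem_singleton]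
      constructor
      · rintro ⟨rfl | rfl | rfl, ha⟩
        · exact absurd ha hx
        · exact absurd ha hy
        · rfl
      · rintro rfl
        exact ⟨Or.inr (Or.inr rfl), hz⟩
    have hD : ({x, y, z} : Finset (Fin N)) \ A = {x, y} := by
      ext a; simp only [Finset.mem_sdiff, Finset.mem_insert, Finset.mem_singleton]
      constructor
      · rintro ⟨rfl | rfl | rfl, ha⟩
        · exact Or.inl rfl
        · exact Or.inr rfl
        · exact absurd hz ha
      · rintro (rfl | rfl)
        · exact ⟨Or.inl rfl, hx⟩
        · exact ⟨Or.inr (Or.inl rfl), hy⟩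
    rw [hS, hD, Finset.card_singleton, if_pos rfl]
    simp only [hx, hy, hz, if_pos, if_neg, if_true, if_false]
    have := angle_le_opp hIzx hIzy hIxy (hr z) (hr x) (hr y)
    linarith
  · -- none
    have hS : ({x, y, z} : Finset (Fin N)) ∩ A = ∅ := by
      ext a; simp only [Finset.mem_inter, Finset.mem_insert, Finset.mem_singleton,
        Finset.notMem_empty, iff_false, not_and]
      rintro (rfl | rfl | rfl) <;> assumption
    rw [hS]
    norm_num [hx, hy, hz]

lemma Cf_univ {Fc : Finset (Finset (Fin N))} (hT : IsTriangulation Fc)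
    (hI : ∀ e ∈ edges Fc, 0 ≤ I e) (hr : ∀ i, 0 < r i) {f : Finset (Fin N)} (hf : f ∈ Fc) :
    Cf I r Finset.univ f = π := by
  obtain ⟨x, y, z, hxy, hxz, hyz, rfl⟩ := Finset.card_eq_three.1 (hT.card3 f hf)
  have hIxy : 0 ≤ I {x, y} := hI _ (pair_mem_edges hf (by simp [Finset.insert_subset_iff]) hxy)
  have hIxz : 0 ≤ I {x, z} := hI _ (pair_mem_edges hf (by simp [Finset.insert_subset_iff]) hxz)
  have hIyz : 0 ≤ I {y, z} := hI _ (pair_mem_edges hf (by simp [Finset.insert_subset_iff]) hyz)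
  rw [Cf_eq Finset.univ hxy hxz hyz]
  simp only [Finset.mem_univ, if_true]
  exact face_angles hxy hxz hyz hIxy hIxz hIyz (hr x) (hr y) (hr z)



lemma edges_card {e : Finset (Fin N)} {Fc : Finset (Finset (Fin N))} (he : e ∈ edges Fc) :
    e.card = 2 := by
  unfold edges at he
  rw [Finset.mem_biUnion] at he
  obtain ⟨f, _, hef⟩ := he
  exact (Finset.mem_powersetCard.1 hef).2

lemma mem_edges_of {e f : Finset (Fin N)} {Fc : Finset (Finset (Fin N))} (hf : f ∈ Fc)
    (hef : e ⊆ f) (hc : e.card = 2) : e ∈ edges Fc := by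
  unfold edges
  rw [Finset.mem_biUnion]
  exact ⟨f, hf, Finset.mem_powersetCard.2 ⟨hef, hc⟩⟩

/-- Double counting of edge-face incidences inside `A`. -/
lemma edge_count {Fc : Finset (Finset (Fin N))} (hT : IsTriangulation Fc)
    (A : Finset (Fin N)) :
    2 * ((edges Fc).filter (fun e => e ⊆ A)).card = ∑ f ∈ Fc, ((f ∩ A).card.choose 2) := by
  have lhs : ∑ e ∈ (edges Fc).filter (fun e => e ⊆ A), (Fc.filter fun f => e ⊆ f).card
      = 2 * ((edges Fc).filter (fun e => e ⊆ A)).card := by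
    rw [Finset.sum_congr rfl (fun e he => hT.edge2 e (Finset.mem_filter.1 he).1),
      Finset.sum_const, smul_eq_mul, mul_comm]
  rw [← lhs]
  have step : ∀ e, (Fc.filter fun f => e ⊆ f).card = ∑ f ∈ Fc, if e ⊆ f then 1 else 0 :=
    fun e => Finset.card_filter _ _
  rw [Finset.sum_congr rfl (fun e _ => step e), Finset.sum_comm]
  apply Finset.sum_congr rfl
  intro f hf
  have hfil : ((edges Fc).filter (fun e => e ⊆ A)).filter (fun e => e ⊆ f)
      = (f ∩ A).powersetCard 2 := by
    ext e
    simp only [Finset.mem_filter, Finset.mem_powersetCard]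
    constructor
    · rintro ⟨⟨he, heA⟩, hef⟩
      exact ⟨Finset.subset_inter hef heA, edges_card he⟩
    · rintro ⟨hsub, hc⟩
      exact ⟨⟨mem_edges_of hf (hsub.trans Finset.inter_subset_left) hc,
        hsub.trans Finset.inter_subset_right⟩, hsub.trans Finset.inter_subset_left⟩
  rw [← Finset.card_filter, hfil, Finset.card_powersetCard]



lemma choose_split {Fc : Finset (Finset (Fin N))} (hT : IsTriangulation Fc)
    (A : Finset (Fin N)) :
    ∑ f ∈ Fc, ((f ∩ A).card.choose 2)
      = (Fc.filter fun f => (f ∩ A).card = 2).card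
        + 3 * (Fc.filter fun f => (f ∩ A).card = 3).card := by
  have key : ∀ m : ℕ, m ≤ 3 → m.choose 2
      = (if m = 2 then 1 else 0) + 3 * (if m = 3 then 1 else 0) := by decide
  have step : ∀ f ∈ Fc, (f ∩ A).card.choose 2
      = (if (f ∩ A).card = 2 then 1 else 0) + 3 * (if (f ∩ A).card = 3 then 1 else 0) := by
    intro f hf
    exact key _ (le_trans (Finset.card_le_card Finset.inter_subset_left)
      (le_of_eq (hT.card3 f hf)))
  rw [Finset.sum_congr rfl step, Finset.sum_add_distrib, ← Finset.card_filter, ← Finset.mul_sum,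
    ← Finset.card_filter]

lemma faces_sub_eq {Fc : Finset (Finset (Fin N))} (hT : IsTriangulation Fc)
    (A : Finset (Fin N)) :
    Fc.filter (fun f => f ⊆ A) = Fc.filter (fun f => (f ∩ A).card = 3) := by
  apply Finset.filter_congr
  intro f hf
  have h3 := hT.card3 f hf
  constructor
  · intro h
    rw [Finset.inter_eq_left.2 h, h3]
  · intro h
    have : f ∩ A = f := Finset.eq_of_subset_of_card_le Finset.inter_subset_left
      (by rw [h3, h])
    rw [← this]
    exact Finset.inter_subset_right

lemma card_two_le_split {Fc : Finset (Finset (Fin N))} (hT : IsTriangulation Fc)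
    (A : Finset (Fin N)) :
    (Fc.filter fun f => 2 ≤ (f ∩ A).card).card
      = (Fc.filter fun f => (f ∩ A).card = 2).card
        + (Fc.filter fun f => (f ∩ A).card = 3).card := by
  have h1 : Fc.filter (fun f => 2 ≤ (f ∩ A).card)
      = Fc.filter (fun f => (f ∩ A).card = 2 ∨ (f ∩ A).card = 3) := by
    apply Finset.filter_congr
    intro f hf
    have hm : (f ∩ A).card ≤ 3 := le_trans (Finset.card_le_card Finset.inter_subset_left)
      (le_of_eq (hT.card3 f hf))
    omega
  rw [h1, Finset.filter_or]
  apply Finset.card_union_of_disjoint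
  rw [Finset.disjoint_left]
  intro f h2 h3
  have := (Finset.mem_filter.1 h2).2
  have := (Finset.mem_filter.1 h3).2
  omega

lemma lk_sum {Fc : Finset (Finset (Fin N))} (hT : IsTriangulation Fc)
    (A : Finset (Fin N)) :
    ∑ p ∈ Lk Fc A, (π - Lam (I p.1))
      = ∑ f ∈ Fc.filter (fun f => (f ∩ A).card = 1), (π - Lam (I (f \ A))) := by
  apply Finset.sum_nbij (fun p => insert p.2 p.1)
  · rintro ⟨e, v⟩ hp
    rw [Lk, Finset.mem_filter] at hp
    obtain ⟨hmem, hout, hv, hins⟩ := hp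
    rw [Finset.mem_filter]
    refine ⟨hins, ?_⟩
    have : insert v e ∩ A = {v} := by
      ext a
      simp only [Finset.mem_inter, Finset.mem_insert, Finset.mem_singleton]
      constructor
      · rintro ⟨rfl | ha, hA⟩
        · rfl
        · exact absurd hA (hout a ha)
      · rintro rfl
        exact ⟨Or.inl rfl, hv⟩
    rw [this, Finset.card_singleton]
  · rintro ⟨e, v⟩ hp ⟨e', v'⟩ hp' heq
    rw [Finset.mem_coe, Lk, Finset.mem_filter] at hp hp'
    obtain ⟨hmem, hout, hv, hins⟩ := hp
    obtain ⟨hmem', hout', hv', hins'⟩ := hp'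
    simp only at heq
    have hveq : v = v' := by
      by_contra hne
      have h1 : v' ∈ insert v e := heq ▸ Finset.mem_insert_self v' e'
      rcases Finset.mem_insert.1 h1 with h | h
      · exact hne h.symm
      · exact hout v' h hv'
    subst hveq
    have hv_e : v ∉ e := fun h => hout v h hv
    have hv_e' : v ∉ e' := fun h => hout' v h hv'
    have : e = e' := by
      rw [← Finset.erase_insert hv_e, ← Finset.erase_insert hv_e']
      exact congrArg (fun s => Finset.erase s v) heq
    simp [this]
  · intro f hf
    rw [Finset.mem_coe, Finset.mem_filter] at hf
    obtain ⟨hfFc, hc1⟩ := hf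
    obtain ⟨v, hv⟩ := Finset.card_eq_one.1 hc1
    have hvf : v ∈ f := (Finset.mem_inter.1 (hv ▸ Finset.mem_singleton_self v)).1
    have hvA : v ∈ A := (Finset.mem_inter.1 (hv ▸ Finset.mem_singleton_self v)).2
    refine ⟨(f.erase v, v), ?_, Finset.insert_erase hvf⟩
    rw [Finset.mem_coe, Lk, Finset.mem_filter]
    refine ⟨Finset.mem_product.2 ⟨mem_edges_of hfFc (Finset.erase_subset _ _)
      (by rw [Finset.card_erase_of_mem hvf, hT.card3 f hfFc]), Finset.mem_univ _⟩,
      ?_, hvA, by rw [Finset.insert_erase hvf]; exact hfFc⟩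
    intro a ha hA
    have haf : a ∈ f := Finset.mem_of_mem_erase ha
    have : a ∈ f ∩ A := Finset.mem_inter.2 ⟨haf, hA⟩
    rw [hv, Finset.mem_singleton] at this
    exact (Finset.ne_of_mem_erase ha) this
  · rintro ⟨e, v⟩ hp
    rw [Lk, Finset.mem_filter] at hp
    obtain ⟨hmem, hout, hv, hins⟩ := hp
    have : insert v e \ A = e := by
      ext a
      simp only [Finset.mem_sdiff, Finset.mem_insert]
      constructor
      · rintro ⟨rfl | ha, hA⟩
        · exact absurd hv hA
        · exact ha
      · intro ha
        exact ⟨Or.inr ha, hout a ha⟩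
    rw [this]



lemma sum_Bf {Fc : Finset (Finset (Fin N))} (hT : IsTriangulation Fc) (A : Finset (Fin N)) :
    ∑ f ∈ Fc, Bf I A f = (∑ p ∈ Lk Fc A, (π - Lam (I p.1)))
      + π * ((Fc.filter fun f => 2 ≤ (f ∩ A).card).card) := by
  rw [← Finset.sum_filter_add_sum_filter_not Fc (fun f => (f ∩ A).card = 1)]
  congr 1
  · rw [lk_sum hT A]
    apply Finset.sum_congr rfl
    intro f hf
    unfold Bf
    rw [if_pos (Finset.mem_filter.1 hf).2]
  · have h2 : ∑ f ∈ Fc.filter (fun f => ¬(f ∩ A).card = 1), Bf I A f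
        = ∑ f ∈ Fc.filter (fun f => ¬(f ∩ A).card = 1),
            (if 2 ≤ (f ∩ A).card then π else 0) :=
      Finset.sum_congr rfl (fun f hf => by
        unfold Bf
        rw [if_neg (Finset.mem_filter.1 hf).2])
    have hfe : Fc.filter (fun f => ¬(f ∩ A).card = 1 ∧ 2 ≤ (f ∩ A).card)
        = Fc.filter (fun f => 2 ≤ (f ∩ A).card) := by
      ext f
      simp only [Finset.mem_filter]
      constructor
      · rintro ⟨h, _, h2⟩
        exact ⟨h, h2⟩
      · rintro ⟨h, h2⟩
        exact ⟨h, by omega, h2⟩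
    rw [h2, ← Finset.sum_filter, Finset.filter_filter, hfe, Finset.sum_const, nsmul_eq_mul,
      mul_comm]

lemma Ybound_le {Fc : Finset (Finset (Fin N))} (hT : IsTriangulation Fc)
    (hI : ∀ e ∈ edges Fc, 0 ≤ I e) (hr : ∀ i, 0 < r i) (A : Finset (Fin N)) :
    Ybound Fc I A ≤ ∑ i ∈ A, Kt Fc I r i := by
  rw [sum_Kt Fc A]
  have h1 : ∑ f ∈ Fc, Cf I r A f ≤ ∑ f ∈ Fc, Bf I A f :=
    Finset.sum_le_sum (fun f hf => Cf_le_Bf hT hI hr hf A)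
  rw [sum_Bf hT A] at h1
  have hcnt : 2 * ((edges Fc).filter (fun e => e ⊆ A)).card
      = (Fc.filter fun f => (f ∩ A).card = 2).card
        + 3 * (Fc.filter fun f => (f ∩ A).card = 3).card :=
    (edge_count hT A).trans (choose_split hT A)
  have h23 := card_two_le_split hT A
  have hfa : (Fc.filter (fun f => f ⊆ A)).card
      = (Fc.filter fun f => (f ∩ A).card = 3).card := by rw [faces_sub_eq hT A]
  unfold Ybound chiSub
  rw [hfa]
  set L := ∑ p ∈ Lk Fc A, (π - Lam (I p.1)) with hL
  set E := ((edges Fc).filter (fun e => e ⊆ A)).card with hE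
  set n2 := (Fc.filter fun f => (f ∩ A).card = 2).card with hn2
  set n3 := (Fc.filter fun f => (f ∩ A).card = 3).card with hn3
  rw [h23] at h1
  have hcntR : (2 * E : ℝ) = (n2 : ℝ) + 3 * n3 := by exact_mod_cast hcnt
  have hπ : π * (2 * E : ℝ) = π * ((n2 : ℝ) + 3 * n3) := by rw [hcntR]
  push_cast at h1 ⊢
  ring_nf at h1 hπ ⊢
  linarith [h1, hπ]

lemma gauss_bonnet {Fc : Finset (Finset (Fin N))} (hT : IsTriangulation Fc)
    (hI : ∀ e ∈ edges Fc, 0 ≤ I e) (hr : ∀ i, 0 < r i) :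
    ∑ i, Kt Fc I r i = 2 * π * (chi Fc : ℝ) := by
  rw [sum_Kt Fc Finset.univ,
    Finset.sum_congr rfl (fun f hf => Cf_univ hT hI hr hf), Finset.sum_const, nsmul_eq_mul]
  have hedges : (edges Fc).filter (fun e => e ⊆ Finset.univ) = edges Fc :=
    Finset.filter_true_of_mem (fun _ _ => Finset.subset_univ _)
  have hn2 : Fc.filter (fun f => (f ∩ Finset.univ).card = 2) = ∅ := by
    apply Finset.filter_false_of_mem
    intro f hf
    rw [Finset.inter_univ, hT.card3 f hf]
    omega
  have hn3 : Fc.filter (fun f => (f ∩ Finset.univ).card = 3) = Fc := by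
    apply Finset.filter_true_of_mem
    intro f hf
    rw [Finset.inter_univ]
    exact hT.card3 f hf
  have hcnt := (edge_count hT Finset.univ).trans (choose_split hT Finset.univ)
  rw [hedges, hn2, hn3, Finset.card_empty] at hcnt
  -- hcnt : 2 * (edges Fc).card = 0 + 3 * Fc.card
  have hcntR : (2 * (edges Fc).card : ℝ) = 3 * (Fc.card : ℝ) := by
    exact_mod_cast hcnt.trans (by omega : 0 + 3 * Fc.card = 3 * Fc.card)
  have hcard : ((Finset.univ : Finset (Fin N)).card : ℝ) = (N : ℝ) := by
    rw [Finset.card_univ, Fintype.card_fin]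
  rw [hcard]
  have hπ2 : π * (2 * ((edges Fc).card : ℝ)) = π * (3 * (Fc.card : ℝ)) := by rw [hcntR]
  unfold chi
  push_cast
  ring_nf at hπ2 ⊢
  linarith [hπ2]

lemma Kt_mem_Ybar {Fc : Finset (Finset (Fin N))} (hT : IsTriangulation Fc)
    (hI : ∀ e ∈ edges Fc, 0 ≤ I e) (hr : ∀ i, 0 < r i) :
    memYbar Fc I (Kt Fc I r) :=
  ⟨gauss_bonnet hT hI hr, fun A _ _ => Ybound_le hT hI hr A⟩


end Aux

/-- if there is a generalized metric r ∈ ℝ^N_{>0} with constant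
extended α-curvature, then:
χ(M) > 0 ⟹ Ȳ contains a point with all coordinates positive;
χ(M) < 0 ⟹ Ȳ contains a point with all coordinates negative;
χ(M) = 0 ⟹ 0 ∈ Ȳ. -/
theorem stmt18 {N : ℕ} (Fc : Finset (Finset (Fin N))) (hT : IsTriangulation Fc)
    (I : Finset (Fin N) → ℝ) (hI : ∀ e ∈ edges Fc, 0 ≤ I e) (α : ℝ)
    (r : Fin N → ℝ) (hr : ∀ i, 0 < r i)
    (hconst : ∀ i : Fin N, Kt Fc I r i = sA Fc α r * r i ^ α) :
    (0 < chi Fc → ∃ x : Fin N → ℝ, (∀ i, 0 < x i) ∧ memYbar Fc I x) ∧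
    (chi Fc < 0 → ∃ x : Fin N → ℝ, (∀ i, x i < 0) ∧ memYbar Fc I x) ∧
    (chi Fc = 0 → memYbar Fc I (0 : Fin N → ℝ)) := by
  haveI : Nonempty (Fin N) := hT.conn.nonempty
  have hmem : memYbar Fc I (Kt Fc I r) := Kt_mem_Ybar hT hI hr
  have hsum : 0 < ∑ j, r j ^ α :=
    Finset.sum_pos (fun j _ => Real.rpow_pos_of_pos (hr j) α) Finset.univ_nonempty
  refine ⟨?_, ?_, ?_⟩
  · intro hχ
    refine ⟨Kt Fc I r, fun i => ?_, hmem⟩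
    rw [hconst i]
    apply mul_pos _ (Real.rpow_pos_of_pos (hr i) α)
    unfold sA
    apply div_pos _ hsum
    have : (0:ℝ) < (chi Fc : ℝ) := by exact_mod_cast hχ
    positivity
  · intro hχ
    refine ⟨Kt Fc I r, fun i => ?_, hmem⟩
    rw [hconst i]
    apply mul_neg_of_neg_of_pos _ (Real.rpow_pos_of_pos (hr i) α)
    unfold sA
    apply div_neg_of_neg_of_pos _ hsum
    have hc : (chi Fc : ℝ) < 0 := by exact_mod_cast hχ
    nlinarith [Real.pi_pos]
  · intro hχ
    have h0 : Kt Fc I r = (0 : Fin N → ℝ) := by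
      funext i
      rw [hconst i]
      unfold sA
      rw [hχ]
      simp
    rw [← h0]
    exact hmem

end IDCP
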